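/- arXiv:1602.02495 — 6 statements merged into one kernel-verified Lean document; each statement's English description precedes it below -/
import Mathlib

section
/- Let G be a finite simple graph and let P1 and P2 be vertex-disjoint paths in G (each path having at least one vertex) such that every vertex v in End(P1) ∪ End(P2) satisfies d_{Ḡ}(v) ≤ v(P1)/2 − 1, where Ḡ is the complement of G. Then there exist an edge f ∈ E(P1) and two edges e1, e2 ∈ E(G) such that ((E(P1) ∪ E(P2)) \ {f}) ∪ {e1, e2} is the edge set of a path P of G with V(P) = V(P1) ∪ V(P2) and End(P) ⊆ End(P1) ∪ End(P2). -/
/-!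
Let `n = v(P₁)`. An endpoint `z` of `P₂` misses at most `n/2 - 1` vertices of `P₁`, so among the
`n - 1` edges `xy` of `P₁` (oriented from `u₁` to `w₁`) fewer than `n/2` have `x` not adjacent to
`u₂`, and fewer than `n/2` have `y` not adjacent to `w₂`. Hence some edge `xy` of `P₁` has
`x ~ u₂` and `w₂ ~ y`, and replacing `xy` by `x u₂ … w₂ y` (running along `P₂`) gives the path.
-/

open Finset SimpleGraph

namespace SimpleGraph.Walk

variable {V : Type*} {G : SimpleGraph V}

theorem exists_eq_append_cons_of_mem_darts {u v : V} {p : G.Walk u v} {d : G.Dart}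
    (hd : d ∈ p.darts) :
    ∃ (p₁ : G.Walk u d.fst) (p₂ : G.Walk d.snd v), p = p₁.append (cons d.adj p₂) := by
  induction p with
  | nil => simp at hd
  | cons h p ih =>
    rcases List.mem_cons.mp hd with rfl | hd
    · exact ⟨nil, p, rfl⟩
    · obtain ⟨p₁, p₂, rfl⟩ := ih hd
      exact ⟨cons h p₁, p₂, rfl⟩

theorem IsPath.injOn_fst_darts {u v : V} {p : G.Walk u v} (hp : p.IsPath) :
    Set.InjOn (·.fst) {d | d ∈ p.darts} := by
  have : (p.darts.map (·.fst)).Nodup := by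
    rw [map_fst_darts]; exact hp.support_nodup.sublist (List.dropLast_sublist _)
  exact fun _ hd _ hd' => List.inj_on_of_nodup_map this hd hd'

theorem IsPath.injOn_snd_darts {u v : V} {p : G.Walk u v} (hp : p.IsPath) :
    Set.InjOn (·.snd) {d | d ∈ p.darts} := by
  have : (p.darts.map (·.snd)).Nodup := by
    rw [map_snd_darts]; exact hp.support_nodup.sublist (List.tail_sublist _)
  exact fun _ hd _ hd' => List.inj_on_of_nodup_map this hd hd'

/-- Replaces the edge `xy` of `p.append (cons hxy q)` by the detour `x a … b y` along `R`. -/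
def splice {u v x y a b : V} (p : G.Walk u x) (q : G.Walk y v) (R : G.Walk a b)
    (hxa : G.Adj x a) (hby : G.Adj b y) : G.Walk u v :=
  p.append (cons hxa (R.append (cons hby q)))

section Splice

variable {u v x y a b : V} (p : G.Walk u x) (q : G.Walk y v) (R : G.Walk a b)
  (hxy : G.Adj x y) (hxa : G.Adj x a) (hby : G.Adj b y)

theorem support_splice_perm :
    (p.splice q R hxa hby).support.Perm ((p.append (cons hxy q)).support ++ R.support) := by
  simp only [splice, support_append, support_cons, List.tail_cons, List.append_assoc]
  exact List.perm_append_comm.append_left _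

theorem isPath_splice (hP : (p.append (cons hxy q)).IsPath) (hR : R.IsPath)
    (hdisj : List.Disjoint (p.append (cons hxy q)).support R.support) :
    (p.splice q R hxa hby).IsPath := by
  rw [isPath_def, (support_splice_perm p q R hxy hxa hby).nodup_iff, List.nodup_append]
  exact ⟨hP.support_nodup, hR.support_nodup, fun _ h _ h' he => hdisj h (he ▸ h')⟩

theorem support_splice :
    {z | z ∈ (p.splice q R hxa hby).support} =
      {z | z ∈ (p.append (cons hxy q)).support} ∪ {z | z ∈ R.support} := by
  ext z
  simp [(support_splice_perm p q R hxy hxa hby).mem_iff]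

theorem edges_splice (hP : (p.append (cons hxy q)).IsPath)
    (hdisj : List.Disjoint (p.append (cons hxy q)).support R.support) :
    {e | e ∈ (p.splice q R hxa hby).edges} =
      ({e | e ∈ (p.append (cons hxy q)).edges} ∪ {e | e ∈ R.edges}) \ {s(x, y)} ∪
        {s(x, a), s(b, y)} := by
  have hnodup := edges_nodup_of_support_nodup hP.support_nodup
  simp only [edges_append, edges_cons, List.nodup_append, List.nodup_cons] at hnodup
  have hxR : x ∉ R.support := fun h => hdisj (by simp) h
  ext e
  simp only [splice, edges_append, edges_cons, List.mem_append, List.mem_cons, Set.mem_union,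
    Set.mem_sdiff, Set.mem_insert_iff, Set.mem_singleton_iff]
  grind [fst_mem_support_of_mem_edges, snd_mem_support_of_mem_edges]

end Splice

end SimpleGraph.Walk

namespace SimpleGraph

variable {V : Type*} [Fintype V] [DecidableEq V] {G : SimpleGraph V} [DecidableRel G.Adj]

theorem card_filter_not_adj_le_degree_compl {α : Type*} {s : Finset α} {g : α → V} {z : V}
    (hg : Set.InjOn g s) (hz : ∀ a ∈ s, g a ≠ z) :
    #{a ∈ s | ¬ G.Adj z (g a)} ≤ Gᶜ.degree z := by
  refine card_le_card_of_injOn g (fun a ha => ?_) (hg.mono (coe_subset.mpr (filter_subset _ _)))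
  rw [mem_coe, mem_filter] at ha
  simpa [compl_adj] using ⟨(hz a ha.1).symm, ha.2⟩

theorem Walk.IsPath.exists_dart_adj_fst_adj_snd {u v x y : V} {p : G.Walk u v} (hp : p.IsPath)
    (hx : x ∉ p.support) (hy : y ∉ p.support) (hdeg : Gᶜ.degree x + Gᶜ.degree y < p.length) :
    ∃ d ∈ p.darts, G.Adj x d.fst ∧ G.Adj y d.snd := by
  by_contra! h
  set D := p.darts.toFinset
  have hcover : D ⊆ {d ∈ D | ¬ G.Adj x d.fst} ∪ {d ∈ D | ¬ G.Adj y d.snd} := by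
    intro d hd
    by_cases hxd : G.Adj x d.fst <;> simp_all [D]
  have hfst : #{d ∈ D | ¬ G.Adj x d.fst} ≤ Gᶜ.degree x :=
    card_filter_not_adj_le_degree_compl (by simpa [D] using hp.injOn_fst_darts)
      fun d hd h => hx (h ▸ p.dart_fst_mem_support_of_mem_darts (List.mem_toFinset.mp hd))
  have hsnd : #{d ∈ D | ¬ G.Adj y d.snd} ≤ Gᶜ.degree y :=
    card_filter_not_adj_le_degree_compl (by simpa [D] using hp.injOn_snd_darts)
      fun d hd h => hy (h ▸ p.dart_snd_mem_support_of_mem_darts (List.mem_toFinset.mp hd))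
  have hD : #D = p.length := by
    rw [List.toFinset_card_of_nodup (darts_nodup_of_support_nodup hp.support_nodup), length_darts]
  have := (card_le_card hcover).trans (card_union_le _ _)
  omega

end SimpleGraph

/-- **Rotation lemma.** Let `P₁`, `P₂` be vertex-disjoint paths in a finite simple graph `G`
such that every endpoint `z` of `P₁` or `P₂` satisfies `d_{Ḡ}(z) ≤ v(P₁)/2 - 1`.
Then there is an edge `f ∈ E(P₁)` and edges `e₁, e₂ ∈ E(G)` such that
`((E(P₁) ∪ E(P₂)) \ {f}) ∪ {e₁, e₂}` is the edge set of a path `P` of `G` with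
`V(P) = V(P₁) ∪ V(P₂)` and `End(P) ⊆ End(P₁) ∪ End(P₂)`. -/
theorem rotation_two_paths {V : Type*} [Fintype V] [DecidableEq V]
    (G : SimpleGraph V) [DecidableRel G.Adj]
    {u₁ w₁ u₂ w₂ : V} (P₁ : G.Walk u₁ w₁) (P₂ : G.Walk u₂ w₂)
    (hP₁ : P₁.IsPath) (hP₂ : P₂.IsPath)
    (hdisj : List.Disjoint P₁.support P₂.support)
    (hdeg : ∀ z ∈ ({u₁, w₁, u₂, w₂} : Set V),
      (Gᶜ.degree z : ℝ) ≤ (P₁.support.length : ℝ) / 2 - 1) :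
    ∃ f ∈ P₁.edges, ∃ e₁ ∈ G.edgeSet, ∃ e₂ ∈ G.edgeSet,
      ∃ (a b : V) (P : G.Walk a b), P.IsPath ∧
        {e : Sym2 V | e ∈ P.edges} =
          (({e : Sym2 V | e ∈ P₁.edges} ∪ {e : Sym2 V | e ∈ P₂.edges}) \ {f}) ∪ {e₁, e₂} ∧
        {x : V | x ∈ P.support} = {x : V | x ∈ P₁.support} ∪ {x : V | x ∈ P₂.support} ∧
        a ∈ ({u₁, w₁, u₂, w₂} : Set V) ∧ b ∈ ({u₁, w₁, u₂, w₂} : Set V) := by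
  have hu₂ : u₂ ∉ P₁.support := fun h => hdisj h P₂.start_mem_support
  have hw₂ : w₂ ∉ P₁.support := fun h => hdisj h P₂.end_mem_support
  have hlen : Gᶜ.degree u₂ + Gᶜ.degree w₂ < P₁.length := by
    have hdeg_u₂ := hdeg u₂ (by simp)
    have hdeg_w₂ := hdeg w₂ (by simp)
    rw [Walk.length_support, Nat.cast_succ] at hdeg_u₂ hdeg_w₂
    have : ((Gᶜ.degree u₂ + Gᶜ.degree w₂ : ℕ) : ℝ) < P₁.length := by push_cast; linarith
    exact_mod_cast this
  obtain ⟨d, hd, hu, hw⟩ := hP₁.exists_dart_adj_fst_adj_snd hu₂ hw₂ hlen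
  obtain ⟨p, q, rfl⟩ := Walk.exists_eq_append_cons_of_mem_darts hd
  exact ⟨s(d.fst, d.snd), by simp, _, hu.symm, _, hw, u₁, w₁, p.splice q P₂ hu.symm hw,
    Walk.isPath_splice p q P₂ d.adj hu.symm hw hP₁ hP₂ hdisj,
    Walk.edges_splice p q P₂ d.adj hu.symm hw hP₁ hdisj,
    Walk.support_splice p q P₂ d.adj hu.symm hw, by simp, by simp⟩
end

section
/- Let G be a finite simple graph on n vertices and let P1, P2, …, Pt be pairwise vertex-disjoint paths in G such that the union of their vertex sets is V(G). Suppose that every vertex v in ⋃_{i=1}^t End(Pi) satisfies d_{Ḡ}(v) ≤ n/(2t) − 1, where Ḡ is the complement of G. Then there exists a set E* ⊆ E(G) of at most 2t − 2 edges such that ⋃_{i=1}^t E(Pi) ∪ E* contains the edge set of a Hamilton path P of G (a path passing through every vertex of G) with End(P) ⊆ ⋃_{i=1}^t End(Pi). -/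
/-!
Merge the paths two at a time. If `P = p₀ ⋯ pₘ` and a disjoint path `Q` from `c` to `d` are such
that `c ~ pᵢ` and `d ~ pᵢ₊₁` for some `i`, then `p₀ ⋯ pᵢ Q pᵢ₊₁ ⋯ pₘ` is a path with the ends of
`P` that uses two new edges. Each of the `m` edges `pᵢpᵢ₊₁` that fails does so because `pᵢ` is a
non-neighbour of `c` or `pᵢ₊₁` one of `d`, so such an edge exists in `P`, or symmetrically in `Q`,
as soon as the four ends have total `Ḡ`-degree below `|E(P)| + |E(Q)|`. With `k ≤ t` paths
left, the two longest have at least `2n/k ≥ 2n/t` vertices together, while their four ends have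
total `Ḡ`-degree at most `2n/t - 4`; so `t - 1` merges produce a Hamilton path, and its ends are
the ends of one of the original paths.
-/

open List

theorem List.exists_perm_cons_cons_two_mul_sum_le {α : Type*} (f : α → ℕ) {L : List α}
    (hL : 2 ≤ L.length) :
    ∃ x y L', L ~ x :: y :: L' ∧ 2 * (L.map f).sum ≤ L.length * (f x + f y) := by
  set le : α → α → Bool := fun a b => f b ≤ f a
  have hsorted := pairwise_mergeSort (le := le) (fun a b c hab hbc => by simp_all [le]; omega)
    (fun a b => by simp only [le, Bool.or_eq_true, decide_eq_true_eq]; omega) L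
  have hperm := mergeSort_perm L le
  rcases hM : L.mergeSort le with _ | ⟨x, _ | ⟨y, L'⟩⟩
  · simp [← hperm.length_eq, hM] at hL
  · simp [← hperm.length_eq, hM] at hL
  rw [hM] at hsorted hperm
  simp only [pairwise_cons, mem_cons, forall_eq_or_imp, le, decide_eq_true_eq] at hsorted
  have hrest : (L'.map f).sum ≤ L'.length * f y := by
    simpa using sum_le_card_nsmul (L'.map f) (f y) (by simpa using hsorted.2.1)
  refine ⟨x, y, L', hperm.symm, ?_⟩
  rw [(hperm.map f).sum_eq.symm, hperm.length_eq.symm]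
  simp only [map_cons, sum_cons, length_cons]
  nlinarith [Nat.mul_le_mul_left L'.length hsorted.1.1]

namespace SimpleGraph

variable {V : Type*} {G : SimpleGraph V}

theorem countP_not_adj_le_degree_compl [Fintype V] [DecidableEq V] [DecidableRel G.Adj]
    {c : V} {l : List V} (hl : l.Nodup) (hc : c ∉ l) :
    l.countP (fun v => ¬G.Adj c v) ≤ Gᶜ.degree c := by
  rw [countP_eq_length_filter, ← toFinset_card_of_nodup (hl.filter _),
    ← card_neighborFinset_eq_degree]
  refine Finset.card_le_card fun v hv => ?_
  simp only [mem_toFinset, mem_filter, decide_eq_true_eq] at hv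
  simpa [compl_adj] using ⟨fun h => hc (h ▸ hv.1), hv.2⟩

namespace Walk

theorem exists_mem_darts_adj_of_degree_compl_lt [Fintype V] [DecidableEq V] [DecidableRel G.Adj]
    {a b c d : V} {p : G.Walk a b} (hp : p.IsPath) (hc : c ∉ p.support) (hd : d ∉ p.support)
    (hlt : Gᶜ.degree c + Gᶜ.degree d < p.length) :
    ∃ e ∈ p.darts, G.Adj c e.fst ∧ G.Adj d e.snd := by
  by_contra! hbad
  have hfst : p.darts.countP (fun e => ¬G.Adj c e.fst) ≤ Gᶜ.degree c := by
    have := countP_not_adj_le_degree_compl (G := G) (hp.support_nodup.sublist (dropLast_sublist _))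
      (fun h => hc (mem_of_mem_dropLast h))
    rwa [← map_fst_darts, countP_map] at this
  have hsnd : p.darts.countP (fun e => ¬G.Adj d e.snd) ≤ Gᶜ.degree d := by
    have := countP_not_adj_le_degree_compl (G := G) (hp.support_nodup.sublist (tail_sublist _))
      (fun h => hd (mem_of_mem_tail h))
    rwa [← map_snd_darts, countP_map] at this
  -- every dart of `p` fails at `c` or at `d`
  have hgood_le : p.darts.countP (fun e => ¬¬G.Adj c e.fst) ≤
      p.darts.countP (fun e => ¬G.Adj d e.snd) :=
    countP_mono_left fun e he h => by simpa using hbad e he (by simpa using h)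
  have := length_eq_countP_add_countP (fun e : G.Dart => ¬G.Adj c e.fst) (l := p.darts)
  simp only [decide_eq_true_eq] at this hgood_le
  rw [length_darts] at this
  omega

theorem exists_splice_of_mem_darts {a b c d : V} (p : G.Walk a b) (q : G.Walk c d)
    {e : G.Dart} (he : e ∈ p.darts) (hc : G.Adj c e.fst) (hd : G.Adj d e.snd) :
    ∃ r : G.Walk a b, r.support ~ p.support ++ q.support ∧
      r.edges ⊆ s(e.fst, c) :: s(d, e.snd) :: (p.edges ++ q.edges) := by
  obtain ⟨p₁, p₂, rfl⟩ := (isSubwalk_toWalk_adj_iff_mem_darts p).mpr he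
  refine ⟨p₁.append (cons hc.symm (q.append (cons hd p₂))), ?_, fun x hx => ?_⟩
  · simpa [support_append] using perm_append_comm.append_left p₁.support
  · simp only [edges_append, edges_cons, Adj.toWalk, edges_nil, mem_append, mem_cons] at hx ⊢
    tauto

theorem IsPath.exists_merge [Fintype V] [DecidableEq V] [DecidableRel G.Adj] {a b c d : V}
    {p : G.Walk a b} {q : G.Walk c d} (hp : p.IsPath) (hq : q.IsPath)
    (hpq : p.support.Disjoint q.support)
    (hdeg : Gᶜ.degree a + Gᶜ.degree b + Gᶜ.degree c + Gᶜ.degree d < p.length + q.length) :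
    ∃ (x y : V) (r : G.Walk x y), ((x, y) = (a, b) ∨ (x, y) = (c, d)) ∧
      r.support ~ p.support ++ q.support ∧
      ∃ e₁ ∈ G.edgeSet, ∃ e₂ ∈ G.edgeSet, r.edges ⊆ e₁ :: e₂ :: (p.edges ++ q.edges) := by
  by_cases hlt : Gᶜ.degree c + Gᶜ.degree d < p.length
  · obtain ⟨e, he, hc, hd⟩ := exists_mem_darts_adj_of_degree_compl_lt hp
      (fun h => hpq h q.start_mem_support) (fun h => hpq h q.end_mem_support) hlt
    obtain ⟨r, hsupp, hedges⟩ := exists_splice_of_mem_darts p q he hc hd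
    exact ⟨a, b, r, .inl rfl, hsupp, _, G.mem_edgeSet.mpr hc.symm, _, G.mem_edgeSet.mpr hd, hedges⟩
  · obtain ⟨e, he, ha, hb⟩ := exists_mem_darts_adj_of_degree_compl_lt hq
      (fun h => hpq p.start_mem_support h) (fun h => hpq p.end_mem_support h) (by omega)
    obtain ⟨r, hsupp, hedges⟩ := exists_splice_of_mem_darts q p he ha hb
    exact ⟨c, d, r, .inr rfl, hsupp.trans perm_append_comm, _, G.mem_edgeSet.mpr ha.symm, _,
      G.mem_edgeSet.mpr hb, List.Subset.trans hedges ((perm_append_comm.cons _).cons _).subset⟩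

end Walk

/-- Walks are bundled with their endpoints so that walks between different vertices fit into
one list. -/
def vertexList (L : List (Σ p : V × V, G.Walk p.1 p.2)) : List V :=
  (L.map fun s => s.2.support).flatten

def edgeList (L : List (Σ p : V × V, G.Walk p.1 p.2)) : List (Sym2 V) :=
  (L.map fun s => s.2.edges).flatten

variable [DecidableEq V]

/-- Modelled on `Walk.IsHamiltonian`, which is the case of a single walk. -/
def IsPathCover (L : List (Σ p : V × V, G.Walk p.1 p.2)) : Prop :=
  ∀ v, (vertexList L).count v = 1

variable {L L' : List (Σ p : V × V, G.Walk p.1 p.2)}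

theorem IsPathCover.perm (hL : IsPathCover L) (h : L ~ L') : IsPathCover L' := fun v =>
  ((h.map _).flatten.count_eq v).symm.trans (hL v)

theorem IsPathCover.nodup (hL : IsPathCover L) : (vertexList L).Nodup :=
  nodup_iff_count_le_one.mpr fun v => (hL v).le

theorem isPathCover_iff : IsPathCover L ↔ (∀ s ∈ L, s.2.IsPath) ∧
    L.Pairwise (fun s s' => s.2.support.Disjoint s'.2.support) ∧
    ∀ v, ∃ s ∈ L, v ∈ s.2.support := by
  have : IsPathCover L ↔ (vertexList L).Nodup ∧ ∀ v, v ∈ vertexList L :=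
    ⟨fun h => ⟨h.nodup, fun v => count_pos_iff.mp (by simp [h v])⟩,
      fun h v => count_eq_one_of_mem h.1 (h.2 v)⟩
  rw [this, vertexList, nodup_flatten, pairwise_map, and_assoc]
  simp only [mem_map, forall_exists_index, and_imp, forall_apply_eq_imp_iff₂, Walk.isPath_def,
    mem_flatten, exists_exists_and_eq_and]

theorem IsPathCover.sum_length_support [Fintype V] (hL : IsPathCover L) :
    (L.map fun s => s.2.support.length).sum = Fintype.card V := by
  rw [← Fintype.card_congr (getEquivOfForallCountEqOne _ hL), Fintype.card_fin, vertexList,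
    length_flatten, List.map_map]
  rfl

theorem IsPathCover.merge {x y : Σ p : V × V, G.Walk p.1 p.2} (hL : IsPathCover (x :: y :: L))
    {a b : V} {r : G.Walk a b} (hr : r.support ~ x.2.support ++ y.2.support) :
    IsPathCover (⟨(a, b), r⟩ :: L) := fun v => by
  rw [← hL v]
  simpa [vertexList] using (hr.append_right (vertexList L)).count_eq v

theorem IsPathCover.exists_merge_step [Fintype V] [DecidableRel G.Adj] (hL : IsPathCover L)
    (hlen : 2 ≤ L.length)
    (hdeg : ∀ s ∈ L, 2 * L.length * (Gᶜ.degree s.1.1 + 1) ≤ Fintype.card V ∧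
      2 * L.length * (Gᶜ.degree s.1.2 + 1) ≤ Fintype.card V) :
    ∃ L' : List (Σ p : V × V, G.Walk p.1 p.2), IsPathCover L' ∧ L'.length + 1 = L.length ∧
      (∀ s' ∈ L', ∃ s ∈ L, s'.1 = s.1) ∧
      ∃ e₁ ∈ G.edgeSet, ∃ e₂ ∈ G.edgeSet, edgeList L' ⊆ e₁ :: e₂ :: edgeList L := by
  obtain ⟨x, y, L₀, hperm, hsum⟩ :=
    exists_perm_cons_cons_two_mul_sum_le (fun s => s.2.support.length) hlen
  rw [hL.sum_length_support] at hsum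
  have hL₀ := hL.perm hperm
  have hx : x ∈ L := hperm.mem_iff.mpr (mem_cons_self ..)
  have hy : y ∈ L := hperm.mem_iff.mpr (mem_cons_of_mem _ (mem_cons_self ..))
  obtain ⟨hpath, hdisj, -⟩ := isPathCover_iff.mp hL₀
  have hshort : Gᶜ.degree x.1.1 + Gᶜ.degree x.1.2 + Gᶜ.degree y.1.1 + Gᶜ.degree y.1.2 <
      x.2.length + y.2.length := by
    obtain ⟨h₁, h₂⟩ := hdeg x hx
    obtain ⟨h₃, h₄⟩ := hdeg y hy
    have : 2 * L.length * (Gᶜ.degree x.1.1 + Gᶜ.degree x.1.2 + Gᶜ.degree y.1.1 +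
        Gᶜ.degree y.1.2 + 4) ≤ 2 * L.length * (x.2.support.length + y.2.support.length) := by
      nlinarith
    have := Nat.le_of_mul_le_mul_left this (by omega)
    simp only [Walk.length_support] at this
    omega
  obtain ⟨a, b, r, hab, hr, e₁, he₁, e₂, he₂, hedges⟩ :=
    (hpath x (mem_cons_self ..)).exists_merge (hpath y (mem_cons_of_mem _ (mem_cons_self ..)))
      ((pairwise_cons.mp hdisj).1 y (mem_cons_self ..)) hshort
  refine ⟨⟨(a, b), r⟩ :: L₀, hL₀.merge hr, by simp [hperm.length_eq], ?_, e₁, he₁, e₂, he₂, ?_⟩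
  · rintro s' (_ | ⟨_, hs'⟩)
    · rcases hab with h | h
      exacts [⟨x, hx, h⟩, ⟨y, hy, h⟩]
    · exact ⟨s', hperm.mem_iff.mpr (mem_cons_of_mem _ (mem_cons_of_mem _ hs')), rfl⟩
  · intro e he
    have hLe := (hperm.map fun s => s.2.edges).flatten.mem_iff (a := e)
    simp only [edgeList, map_cons, flatten_cons, mem_append, mem_cons] at he hLe ⊢
    rw [hLe]
    rcases he with he | he
    · have := hedges he
      simp only [mem_cons, mem_append] at this
      tauto
    · exact .inr (.inr (.inr (.inr he)))

theorem IsPathCover.exists_isHamiltonian [Fintype V] [DecidableRel G.Adj] (hL : IsPathCover L)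
    (hne : L ≠ [])
    (hdeg : ∀ s ∈ L, 2 * L.length * (Gᶜ.degree s.1.1 + 1) ≤ Fintype.card V ∧
      2 * L.length * (Gᶜ.degree s.1.2 + 1) ≤ Fintype.card V) :
    ∃ (a b : V) (Q : G.Walk a b), Q.IsHamiltonian ∧ (∃ s ∈ L, s.1 = (a, b)) ∧
      ∃ F : Finset (Sym2 V), ↑F ⊆ G.edgeSet ∧ F.card + 2 ≤ 2 * L.length ∧
        ∀ e ∈ Q.edges, e ∈ F ∨ e ∈ edgeList L := by
  induction hn : L.length generalizing L with
  | zero => exact absurd (length_eq_zero_iff.mp hn) hne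
  | succ k ih =>
    rcases Nat.eq_zero_or_pos k with rfl | hk
    · obtain ⟨s, rfl⟩ := length_eq_one_iff.mp hn
      refine ⟨_, _, s.2, fun v => by simpa [vertexList] using hL v, ⟨s, mem_singleton_self s, rfl⟩,
        ∅, by simp, by simp, fun e he => .inr (by simpa [edgeList] using he)⟩
    obtain ⟨L', hL', hlen, hends, e₁, he₁, e₂, he₂, hedges⟩ :=
      hL.exists_merge_step (by omega) hdeg
    have hdeg' : ∀ s' ∈ L', 2 * L'.length * (Gᶜ.degree s'.1.1 + 1) ≤ Fintype.card V ∧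
        2 * L'.length * (Gᶜ.degree s'.1.2 + 1) ≤ Fintype.card V := by
      intro s' hs'
      obtain ⟨s, hs, hss⟩ := hends s' hs'
      rw [hss]
      have hmono : ∀ m, 2 * L'.length * m ≤ 2 * L.length * m := fun m =>
        Nat.mul_le_mul_right m (by omega)
      exact ⟨(hmono _).trans (hdeg s hs).1, (hmono _).trans (hdeg s hs).2⟩
    obtain ⟨a, b, Q, hQ, ⟨s', hs', hab⟩, F, hF, hcard, hQedges⟩ :=
      ih hL' (ne_nil_of_length_pos (by omega)) hdeg' (by omega)
    obtain ⟨s, hs, hss⟩ := hends s' hs'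
    refine ⟨a, b, Q, hQ, ⟨s, hs, hss ▸ hab⟩, insert e₁ (insert e₂ F), ?_, ?_, fun e he => ?_⟩
    · simpa [Set.insert_subset_iff] using ⟨he₁, he₂, hF⟩
    · have := (Finset.card_insert_le e₁ (insert e₂ F)).trans
        (Nat.succ_le_succ (Finset.card_insert_le e₂ F))
      omega
    · rcases hQedges e he with h | h
      · exact .inl (by simp [h])
      · rcases mem_cons.mp (hedges h) with rfl | h
        · exact .inl (by simp)
        rcases mem_cons.mp h with rfl | h
        · exact .inl (by simp)
        exact .inr h

end SimpleGraph

open SimpleGraph in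
/-- Let `G` be a finite simple graph on `n` vertices and `P 0, …, P (t-1)` pairwise
vertex-disjoint paths covering `V(G)`, whose endpoints all satisfy
`d_{Ḡ}(z) ≤ n/(2t) - 1`. Then there is a set `E*` of at most `2t - 2` edges of `G` such
that `⋃ᵢ E(Pᵢ) ∪ E*` contains the edge set of a Hamilton path of `G` whose endpoints
belong to `⋃ᵢ End(Pᵢ)`. -/
theorem exists_hamiltonian_path_of_path_cover
    {V : Type*} [Fintype V] [DecidableEq V]
    (G : SimpleGraph V) [DecidableRel G.Adj]
    (t : ℕ) (ht : 1 ≤ t) (u w : Fin t → V)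
    (P : ∀ i : Fin t, G.Walk (u i) (w i))
    (hP : ∀ i, (P i).IsPath)
    (hdisj : ∀ i j, i ≠ j → List.Disjoint (P i).support (P j).support)
    (hcover : ∀ x : V, ∃ i, x ∈ (P i).support)
    (hdeg : ∀ (i : Fin t), ∀ z ∈ ({u i, w i} : Set V),
      (Gᶜ.degree z : ℝ) ≤ (Fintype.card V : ℝ) / (2 * t) - 1) :
    ∃ Estar : Finset (Sym2 V), ↑Estar ⊆ G.edgeSet ∧ Estar.card ≤ 2 * t - 2 ∧
      ∃ (a b : V) (Q : G.Walk a b), Q.IsHamiltonian ∧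
        (∀ e ∈ Q.edges, (∃ i, e ∈ (P i).edges) ∨ e ∈ Estar) ∧
        (∃ i, a = u i ∨ a = w i) ∧ (∃ i, b = u i ∨ b = w i) := by
  let L := (List.finRange t).map fun i => (⟨(u i, w i), P i⟩ : Σ p : V × V, G.Walk p.1 p.2)
  have hlen : L.length = t := by simp [L]
  have hL : IsPathCover L := isPathCover_iff.mpr
    ⟨by simpa [L] using hP, List.pairwise_map.mpr ((List.nodup_finRange t).imp (hdisj _ _)),
      by simpa [L] using hcover⟩
  have hdegℕ : ∀ s ∈ L, 2 * L.length * (Gᶜ.degree s.1.1 + 1) ≤ Fintype.card V ∧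
      2 * L.length * (Gᶜ.degree s.1.2 + 1) ≤ Fintype.card V := by
    have key : ∀ z : V, (Gᶜ.degree z : ℝ) ≤ Fintype.card V / (2 * t) - 1 →
        2 * t * (Gᶜ.degree z + 1) ≤ Fintype.card V := fun z hz => by
      rw [le_sub_iff_add_le, le_div_iff₀ (by positivity)] at hz
      exact_mod_cast (by linarith : (2 * t * (Gᶜ.degree z + 1) : ℝ) ≤ Fintype.card V)
    simp only [L, List.mem_map, List.mem_finRange, true_and, hlen]
    rintro _ ⟨i, rfl⟩
    exact ⟨key _ (hdeg i _ (by simp)), key _ (hdeg i _ (by simp))⟩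
  obtain ⟨a, b, Q, hQ, ⟨s, hs, hab⟩, F, hF, hcard, hQedges⟩ :=
    hL.exists_isHamiltonian (List.ne_nil_of_length_pos (by omega)) hdegℕ
  obtain ⟨i, -, rfl⟩ := List.mem_map.mp hs
  obtain ⟨rfl, rfl⟩ := Prod.mk.inj hab
  refine ⟨F, hF, by omega, u i, w i, Q, hQ, fun e he => ?_, ⟨i, .inl rfl⟩, ⟨i, .inr rfl⟩⟩
  rcases hQedges e he with h | h
  · exact .inr h
  · exact .inl (by simpa [edgeList, L] using h)
end

section
/- Let G be a finite simple graph on n ≥ 3 vertices containing a Hamilton path P with endpoints x and y. If d_G(x) ≥ n/2 and d_G(y) ≥ n/2, then there exist two edges f1, f2 ∈ E(G) such that E(P) ∪ {f1, f2} contains the edge set of a Hamilton cycle of G. -/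
/-!
Along the path `x = v₀ … v_L = y`, the `deg x` indices `i` with `x ~ v_{i+1}` and the `deg y`
indices `i` with `v_i ~ y` all lie in `[0, L)`, and `deg x + deg y ≥ n > L`, so some `i` has both.
The Pósa rotation `x … v_i y v_{L-1} … v_{i+1}` is again a Hamilton path, and the edge `v_{i+1} x`
closes it into a Hamilton cycle whose edges are those of `P` together with `v_i y` and `v_{i+1} x`.
-/

open Finset

namespace SimpleGraph.Walk

variable {V : Type*} {G : SimpleGraph V} {x y : V}

/-- The Pósa rotation `x … v_i y v_{L-1} … v_{i+1}` of the walk `x = v₀ … v_L = y`. -/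
def posaRotation (p : G.Walk x y) (i : ℕ) (h : G.Adj (p.getVert i) y) :
    G.Walk x (p.getVert (i + 1)) :=
  (p.take i).append (cons h (p.drop (i + 1)).reverse)

lemma support_posaRotation_perm (p : G.Walk x y) {i : ℕ} (hi : i < p.length)
    (h : G.Adj (p.getVert i) y) : (p.posaRotation i h).support.Perm p.support := by
  have hmin : (i + 1) ⊓ p.length = i + 1 := min_eq_left hi
  rw [posaRotation, support_append, support_cons, List.tail_cons, support_reverse,
    support_take, drop_support_eq_support_drop_min, hmin]
  exact ((List.reverse_perm _).append_left _).trans (List.Perm.of_eq (List.take_append_drop _ _))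

lemma IsHamiltonian.posaRotation [DecidableEq V] {p : G.Walk x y} (hp : p.IsHamiltonian)
    {i : ℕ} (hi : i < p.length) (h : G.Adj (p.getVert i) y) :
    (p.posaRotation i h).IsHamiltonian := fun a =>
  ((p.support_posaRotation_perm hi h).count_eq a).trans (hp a)

lemma mem_edges_posaRotation {p : G.Walk x y} {i : ℕ} {h : G.Adj (p.getVert i) y}
    {e : Sym2 V} (he : e ∈ (p.posaRotation i h).edges) :
    e ∈ p.edges ∨ e = s(p.getVert i, y) := by
  simp only [posaRotation, edges_append, edges_cons, edges_reverse, edges_take, edges_drop,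
    List.mem_append, List.mem_cons, List.mem_reverse] at he
  rcases he with he | he | he
  · exact Or.inl (List.mem_of_mem_take he)
  · exact Or.inr he
  · exact Or.inl (List.mem_of_mem_drop he)

lemma IsHamiltonian.cons_isHamiltonianCycle [Fintype V] [DecidableEq V] {p : G.Walk x y}
    (hp : p.IsHamiltonian) (h : G.Adj y x) (hcard : 3 ≤ Fintype.card V) :
    (cons h p).IsHamiltonianCycle := by
  have hlen := hp.length_eq
  refine isHamiltonianCycle_iff_isCycle_and_length_eq.mpr ⟨?_, by rw [length_cons]; omega⟩
  exact isCycle_iff_isPath_tail_and_le_length.mpr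
    ⟨by simpa using hp.isPath, by rw [length_cons]; omega⟩

lemma exists_adj_getVert_succ_and_adj_getVert [Fintype V] [DecidableRel G.Adj]
    {p : G.Walk x y} (hp : ∀ w, w ∈ p.support) (hdeg : p.length < G.degree x + G.degree y) :
    ∃ i < p.length, G.Adj x (p.getVert (i + 1)) ∧ G.Adj (p.getVert i) y := by
  classical
  set A := {i ∈ range p.length | G.Adj x (p.getVert (i + 1))}
  set B := {i ∈ range p.length | G.Adj (p.getVert i) y}
  have hA : G.degree x ≤ #A := by
    rw [← card_neighborFinset_eq_degree]
    refine (card_le_card fun w hw => ?_).trans (card_image_le (f := fun i => p.getVert (i + 1)))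
    rw [mem_neighborFinset] at hw
    obtain ⟨k, rfl, hk⟩ := mem_support_iff_exists_getVert.mp (hp w)
    obtain ⟨j, rfl⟩ : ∃ j, k = j + 1 :=
      Nat.exists_eq_succ_of_ne_zero (by rintro rfl; exact hw.ne (getVert_zero p).symm)
    exact mem_image.mpr ⟨j, mem_filter.mpr ⟨mem_range.mpr (by omega), hw⟩, rfl⟩
  have hB : G.degree y ≤ #B := by
    rw [← card_neighborFinset_eq_degree]
    refine (card_le_card fun w hw => ?_).trans (card_image_le (f := p.getVert))
    rw [mem_neighborFinset] at hw
    obtain ⟨k, rfl, hk⟩ := mem_support_iff_exists_getVert.mp (hp w)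
    have hkL : k ≠ p.length := by rintro rfl; exact hw.ne (getVert_length p).symm
    exact mem_image.mpr ⟨k, mem_filter.mpr ⟨mem_range.mpr (by omega), hw.symm⟩, rfl⟩
  obtain ⟨i, hi⟩ := inter_nonempty_of_card_lt_card_add_card (filter_subset _ _)
    (filter_subset _ _) (by rw [card_range]; omega : #(range p.length) < #A + #B)
  simp only [mem_inter, mem_filter, mem_range] at hi
  exact ⟨i, hi.1.1, hi.1.2, hi.2.2⟩

end SimpleGraph.Walk

open SimpleGraph Walk

/-- If a finite simple graph `G` on `n ≥ 3` vertices contains a Hamilton path with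
endpoints `x` and `y` of degrees `d_G(x) ≥ n/2` and `d_G(y) ≥ n/2`, then there are two
edges `f₁, f₂ ∈ E(G)` such that `E(P) ∪ {f₁, f₂}` contains the edge set of a Hamilton
cycle of `G`. -/
theorem hamiltonian_cycle_of_hamiltonian_path
    {V : Type*} [Fintype V] [DecidableEq V]
    (G : SimpleGraph V) [DecidableRel G.Adj]
    (hn : 3 ≤ Fintype.card V)
    {x y : V} (P : G.Walk x y) (hP : P.IsHamiltonian)
    (hx : (Fintype.card V : ℝ) / 2 ≤ (G.degree x : ℝ))
    (hy : (Fintype.card V : ℝ) / 2 ≤ (G.degree y : ℝ)) :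
    ∃ f₁ ∈ G.edgeSet, ∃ f₂ ∈ G.edgeSet,
      ∃ (a : V) (C : G.Walk a a), C.IsHamiltonianCycle ∧
        ∀ e ∈ C.edges, e ∈ P.edges ∨ e = f₁ ∨ e = f₂ := by
  have hdeg : P.length < G.degree x + G.degree y := by
    have hsum : (Fintype.card V : ℝ) ≤ G.degree x + G.degree y := by linarith
    have hsum' : Fintype.card V ≤ G.degree x + G.degree y := by exact_mod_cast hsum
    have := hP.length_eq
    omega
  obtain ⟨i, hi, hxi, hyi⟩ := exists_adj_getVert_succ_and_adj_getVert hP.mem_support hdeg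
  refine ⟨s(P.getVert (i + 1), x), hxi.symm, s(P.getVert i, y), hyi, _,
    cons hxi.symm (P.posaRotation i hyi), (hP.posaRotation hi hyi).cons_isHamiltonianCycle _ hn,
    fun e he => ?_⟩
  rcases List.mem_cons.mp (edges_cons _ _ ▸ he) with rfl | he
  · exact Or.inr (Or.inl rfl)
  · exact (mem_edges_posaRotation he).imp_right Or.inr
end

section
/- Suppose |𝒫| ≥ 2, every vertex of End(𝒫) is incident with at least one good edge, and D(e) ≤ 1 holds for every good edge e. Then the number of bad edges is at most 1. -/
/-!
Let `ab` and `cd` be bad edges, with `a` an endpoint of path `i` and, say, `c` an endpoint of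
a path other than `i`, so that `ac` is a cross edge. Every vertex of a bad edge is an endpoint,
hence lies on a good edge, and `D ≤ 1` says that a good edge meets at most one bad edge; so two
bad edges sharing a vertex coincide. If `ac` is good, it meets both `ab` and `cd`. If `ac` is
bad, it shares `a` with `ab`, so `ac = ab`, which then shares `c` with `cd`. Either way
`ab = cd`.
-/

/-- The set of endpoints of a family of paths whose endpoints are given by `u i`, `v i`. -/
def endpointSet {V ι : Type*} (u v : ι → V) : Set V := Set.range u ∪ Set.range v

/-- `e` is an edge of `K_n` joining an endpoint of one path of the family to an endpoint
of a different path of the family. -/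
def IsCrossEdge {V ι : Type*} (u v : ι → V) (e : Sym2 V) : Prop :=
  ∃ (i j : ι) (x y : V), i ≠ j ∧ (x = u i ∨ x = v i) ∧ (y = u j ∨ y = v j) ∧ e = s(x, y)

/-- A cross edge is *bad* if it belongs to the graph `B`. -/
def IsBadEdge {V ι : Type*} (B : SimpleGraph V) (u v : ι → V) (e : Sym2 V) : Prop :=
  IsCrossEdge u v e ∧ e ∈ B.edgeSet

/-- A cross edge is *good* if it does not belong to the graph `B`. -/
def IsGoodEdge {V ι : Type*} (B : SimpleGraph V) (u v : ι → V) (e : Sym2 V) : Prop :=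
  IsCrossEdge u v e ∧ e ∉ B.edgeSet

/-- `Dval B u v e` is the number of bad edges sharing a vertex with `e`. -/
noncomputable def Dval {V ι : Type*} (B : SimpleGraph V) (u v : ι → V) (e : Sym2 V) : ℕ :=
  Set.ncard {f : Sym2 V | IsBadEdge B u v f ∧ ∃ z, z ∈ e ∧ z ∈ f}

section BadEdges

variable {V ι : Type*} {B : SimpleGraph V} {u v : ι → V} {e f₁ f₂ : Sym2 V}

namespace IsCrossEdge

theorem mem_endpointSet (he : IsCrossEdge u v e) {x : V} (hx : x ∈ e) :
    x ∈ endpointSet u v := by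
  obtain ⟨i, j, a, b, -, ha, hb, rfl⟩ := he
  rcases Sym2.mem_iff.mp hx with rfl | rfl
  · rcases ha with rfl | rfl
    exacts [Or.inl ⟨i, rfl⟩, Or.inr ⟨i, rfl⟩]
  · rcases hb with rfl | rfl
    exacts [Or.inl ⟨j, rfl⟩, Or.inr ⟨j, rfl⟩]

theorem exists_mem_of_ne (he : IsCrossEdge u v e) (i : ι) :
    ∃ j ≠ i, ∃ y ∈ e, y = u j ∨ y = v j := by
  obtain ⟨k, l, a, b, hkl, ha, hb, rfl⟩ := he
  by_cases hk : k = i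
  · exact ⟨l, hk ▸ hkl.symm, b, Sym2.mem_mk_right a b, hb⟩
  · exact ⟨k, hk, a, Sym2.mem_mk_left a b, ha⟩

end IsCrossEdge

theorem two_le_dval [Finite V] (hf₁ : IsBadEdge B u v f₁) (hf₂ : IsBadEdge B u v f₂)
    (hne : f₁ ≠ f₂) (h₁ : ∃ z, z ∈ e ∧ z ∈ f₁) (h₂ : ∃ z, z ∈ e ∧ z ∈ f₂) :
    2 ≤ Dval B u v e := by
  have hsub : ({f₁, f₂} : Set (Sym2 V)) ⊆
      {f : Sym2 V | IsBadEdge B u v f ∧ ∃ z, z ∈ e ∧ z ∈ f} := by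
    rintro f (rfl | rfl)
    exacts [⟨hf₁, h₁⟩, ⟨hf₂, h₂⟩]
  calc 2 = ({f₁, f₂} : Set (Sym2 V)).ncard := (Set.ncard_pair hne).symm
    _ ≤ Dval B u v e := Set.ncard_le_ncard hsub

section AtMostOneBadEdgePerGoodEdge

variable [Finite V] (hD : ∀ e, IsGoodEdge B u v e → Dval B u v e ≤ 1)
include hD

theorem IsGoodEdge.eq_of_isBadEdge (he : IsGoodEdge B u v e) (hf₁ : IsBadEdge B u v f₁)
    (hf₂ : IsBadEdge B u v f₂) (h₁ : ∃ z, z ∈ e ∧ z ∈ f₁) (h₂ : ∃ z, z ∈ e ∧ z ∈ f₂) :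
    f₁ = f₂ := by
  by_contra hne
  have := two_le_dval hf₁ hf₂ hne h₁ h₂
  have := hD e he
  omega

theorem IsBadEdge.eq_of_mem_of_mem
    (hgood : ∀ x ∈ endpointSet u v, ∃ e, IsGoodEdge B u v e ∧ x ∈ e)
    (hf₁ : IsBadEdge B u v f₁) (hf₂ : IsBadEdge B u v f₂) {x : V} (hx₁ : x ∈ f₁) (hx₂ : x ∈ f₂) :
    f₁ = f₂ := by
  obtain ⟨e, he, hxe⟩ := hgood x (hf₁.1.mem_endpointSet hx₁)
  exact he.eq_of_isBadEdge hD hf₁ hf₂ ⟨x, hxe, hx₁⟩ ⟨x, hxe, hx₂⟩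

theorem ncard_setOf_isBadEdge_le_one
    (hgood : ∀ x ∈ endpointSet u v, ∃ e, IsGoodEdge B u v e ∧ x ∈ e) :
    Set.ncard {e : Sym2 V | IsBadEdge B u v e} ≤ 1 := by
  rw [Set.ncard_le_one (Set.toFinite _)]
  intro f₁ hf₁ f₂ hf₂
  obtain ⟨i, j, a, b, -, ha, -, rfl⟩ := hf₁.1
  obtain ⟨m, hmi, c, hc, hcm⟩ := hf₂.1.exists_mem_of_ne i
  have hac : IsCrossEdge u v s(a, c) := ⟨i, m, a, c, hmi.symm, ha, hcm, rfl⟩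
  by_cases hacB : s(a, c) ∈ B.edgeSet
  · have hab : s(a, c) = s(a, b) :=
      IsBadEdge.eq_of_mem_of_mem hD hgood ⟨hac, hacB⟩ hf₁ (Sym2.mem_mk_left a c)
        (Sym2.mem_mk_left a b)
    exact IsBadEdge.eq_of_mem_of_mem hD hgood hf₁ hf₂ (hab ▸ Sym2.mem_mk_right a c) hc
  · exact IsGoodEdge.eq_of_isBadEdge hD ⟨hac, hacB⟩ hf₁ hf₂
      ⟨a, Sym2.mem_mk_left a c, Sym2.mem_mk_left a b⟩ ⟨c, Sym2.mem_mk_right a c, hc⟩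

end AtMostOneBadEdgePerGoodEdge

end BadEdges

theorem bad_edges_le_one_general
    {V : Type*} [Fintype V]
    (B : SimpleGraph V) (t : ℕ) (u v : Fin t → V)
    (hgood : ∀ x ∈ endpointSet u v, ∃ e, IsGoodEdge B u v e ∧ x ∈ e)
    (hD : ∀ e, IsGoodEdge B u v e → Dval B u v e ≤ 1) :
    Set.ncard {e : Sym2 V | IsBadEdge B u v e} ≤ 1 :=
  ncard_setOf_isBadEdge_le_one hD hgood

/-- If the family `𝒫` consists of at least 2 pairwise vertex-disjoint paths of `K_n`,
each with at least one edge, every vertex of `End(𝒫)` is incident with at least one good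
edge, and `D(e) ≤ 1` for every good edge `e`, then there is at most one bad edge. -/
theorem bad_edges_le_one
    {V : Type*} [Fintype V] [DecidableEq V]
    (B : SimpleGraph V) (t : ℕ) (ht : 2 ≤ t) (u v : Fin t → V)
    (P : ∀ i : Fin t, (⊤ : SimpleGraph V).Walk (u i) (v i))
    (hP : ∀ i, (P i).IsPath) (hne : ∀ i, u i ≠ v i)
    (hdisj : ∀ i j, i ≠ j → List.Disjoint (P i).support (P j).support)
    (hgood : ∀ x ∈ endpointSet u v, ∃ e, IsGoodEdge B u v e ∧ x ∈ e)
    (hD : ∀ e, IsGoodEdge B u v e → Dval B u v e ≤ 1) :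
    Set.ncard {e : Sym2 V | IsBadEdge B u v e} ≤ 1 :=
  bad_edges_le_one_general B t u v hgood hD
end

section
/- Suppose |𝒫| ≥ 4, every vertex of End(𝒫) is incident with at least one good edge, and D(e) ≤ 2 holds for every good edge e. Then the number of bad edges is at most |𝒫|. -/
/-!
Every endpoint lies on at most two bad edges, since a good edge at it meets all of them. If every
vertex lies on at most one bad edge, the bad edges form a matching on the at most `2|𝒫|`
endpoints. Otherwise some endpoint `x` lies on two bad edges `xa` and `xb`. An endpoint `p` of a
bad edge outside `{a, b}` and the path of `x` is impossible: the cross edge `xp` would be either a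
third bad edge at `x` or a good edge meeting three bad edges. So all bad edges live on the four
vertices `a`, `b` and the ends of the path of `x`, and by double counting a graph of maximum
degree two on four vertices has at most four edges.
-/

namespace Sym2

variable {α : Type*} {F : Set (Sym2 α)}

lemma finite_of_forall_mem_finset (S : Finset α) (hFS : ∀ e ∈ F, ∀ x ∈ e, x ∈ S) : F.Finite :=
  S.sym2.finite_toSet.subset fun e he => Finset.mem_sym2_iff.mpr (hFS e he)

lemma two_mul_ncard_le_mul_card (S : Finset α) {k : ℕ} (hdiag : ∀ e ∈ F, ¬e.IsDiag)
    (hFS : ∀ e ∈ F, ∀ x ∈ e, x ∈ S) (hdeg : ∀ x ∈ S, {e ∈ F | x ∈ e}.ncard ≤ k) :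
    2 * F.ncard ≤ k * S.card := by
  classical
  have hF := finite_of_forall_mem_finset S hFS
  rw [Set.ncard_eq_toFinset_card F hF, mul_comm 2, mul_comm k]
  refine Finset.card_mul_le_card_mul (fun e x => x ∈ e) (fun e he => ?_) (fun x hx => ?_)
  · rw [Set.Finite.mem_toFinset] at he
    have hverts : S.bipartiteAbove (fun e x => x ∈ e) e = e.toFinset := by
      ext x
      simpa [Finset.mem_bipartiteAbove] using hFS e he x
    rw [hverts, Sym2.card_toFinset_of_not_isDiag e (hdiag e he)]
  · rw [← Set.ncard_coe_finset, Finset.coe_bipartiteBelow]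
    simpa only [Set.Finite.mem_toFinset] using hdeg x hx

end Sym2

section BadEdges

variable {V ι : Type*} {B : SimpleGraph V} {u v : ι → V}

lemma mem_endpointSet_iff {x : V} : x ∈ endpointSet u v ↔ ∃ i, x = u i ∨ x = v i := by
  simp only [endpointSet, Set.mem_union, Set.mem_range, eq_comm (b := x)]
  exact exists_or.symm

lemma endpointSet_eq_coe [Fintype ι] [DecidableEq V] (u v : ι → V) :
    endpointSet u v = ↑(Finset.univ.image u ∪ Finset.univ.image v) := by
  simp [endpointSet]

lemma IsCrossEdge.mem_endpointSet_s5 {e : Sym2 V} (he : IsCrossEdge u v e) {x : V} (hx : x ∈ e) :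
    x ∈ endpointSet u v := by
  obtain ⟨i, j, y, z, -, hy, hz, rfl⟩ := he
  rw [mem_endpointSet_iff]
  rcases Sym2.mem_iff.mp hx with rfl | rfl
  exacts [⟨i, hy⟩, ⟨j, hz⟩]

lemma IsBadEdge.not_isDiag {e : Sym2 V} (he : IsBadEdge B u v e) : ¬e.IsDiag :=
  B.not_isDiag_of_mem_edgeSet he.2

lemma finite_setOf_isBadEdge [Finite ι] : {e | IsBadEdge B u v e}.Finite := by
  classical
  have := Fintype.ofFinite ι
  refine Sym2.finite_of_forall_mem_finset (Finset.univ.image u ∪ Finset.univ.image v) ?_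
  intro e he x hx
  simpa [endpointSet_eq_coe] using he.1.mem_endpointSet_s5 hx

lemma ncard_setOf_isBadEdge_le_card [Fintype ι]
    (h : ∀ x, {e | IsBadEdge B u v e ∧ x ∈ e}.ncard ≤ 1) :
    {e | IsBadEdge B u v e}.ncard ≤ Fintype.card ι := by
  classical
  have hcount := Sym2.two_mul_ncard_le_mul_card (F := {e | IsBadEdge B u v e})
    (Finset.univ.image u ∪ Finset.univ.image v)
    (fun _ he => he.not_isDiag)
    (fun _ he x hx => by simpa [endpointSet_eq_coe] using he.1.mem_endpointSet_s5 hx)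
    (fun x _ => h x)
  have := (Finset.card_union_le _ _).trans
    (add_le_add (Finset.card_image_le (s := Finset.univ) (f := u))
      (Finset.card_image_le (s := Finset.univ) (f := v)))
  simp only [Finset.card_univ] at this
  omega

variable [Finite ι]

lemma ncard_setOf_isBadEdge_mem_le_two
    (hgood : ∀ x ∈ endpointSet u v, ∃ e, IsGoodEdge B u v e ∧ x ∈ e)
    (hD : ∀ e, IsGoodEdge B u v e → Dval B u v e ≤ 2) (x : V) :
    {e | IsBadEdge B u v e ∧ x ∈ e}.ncard ≤ 2 := by
  by_cases hx : x ∈ endpointSet u v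
  · obtain ⟨g, hg, hxg⟩ := hgood x hx
    refine le_trans (Set.ncard_le_ncard ?_ (finite_setOf_isBadEdge.subset fun _ h => h.1)) (hD g hg)
    exact fun e ⟨he, hxe⟩ => ⟨he, x, hxg, hxe⟩
  · have : {e | IsBadEdge B u v e ∧ x ∈ e} = ∅ :=
      Set.eq_empty_of_forall_notMem fun e ⟨he, hxe⟩ => hx (he.1.mem_endpointSet_s5 hxe)
    simp [this]

lemma mem_of_isBadEdge_of_two_badEdges_at
    (hgood : ∀ x ∈ endpointSet u v, ∃ e, IsGoodEdge B u v e ∧ x ∈ e)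
    (hD : ∀ e, IsGoodEdge B u v e → Dval B u v e ≤ 2) {i : ι} {x a b : V}
    (hx : x = u i ∨ x = v i) (ha : IsBadEdge B u v s(x, a)) (hb : IsBadEdge B u v s(x, b))
    (hab : a ≠ b) {e : Sym2 V} (he : IsBadEdge B u v e) {p : V} (hp : p ∈ e) :
    p = u i ∨ p = v i ∨ p = a ∨ p = b := by
  by_contra! hp'
  obtain ⟨hpu, hpv, hpa, hpb⟩ := hp'
  obtain ⟨k, hk⟩ := mem_endpointSet_iff.mp (he.1.mem_endpointSet_s5 hp)
  have hik : i ≠ k := by rintro rfl; tauto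
  have hxp : IsCrossEdge u v s(x, p) := ⟨i, k, x, p, hik, hx, hk, rfl⟩
  have hxa_ne_xb : s(x, a) ≠ s(x, b) := mt Sym2.congr_right.mp hab
  have hp_notMem : ∀ c, p ≠ c → p ∉ s(x, c) := by
    intro c hpc hpxc
    rcases Sym2.mem_iff.mp hpxc with rfl | rfl
    · rcases hx with rfl | rfl <;> contradiction
    · exact hpc rfl
  have hfin : {e | IsBadEdge B u v e}.Finite := finite_setOf_isBadEdge
  by_cases hbad : s(x, p) ∈ B.edgeSet
  · -- `x` would lie on the three bad edges `xa`, `xb`, `xp`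
    refine (ncard_setOf_isBadEdge_mem_le_two hgood hD x).not_gt ?_
    refine (Set.two_lt_ncard (hfin.subset fun _ h => h.1)).mpr
      ⟨_, ⟨ha, Sym2.mem_mk_left x a⟩, _, ⟨hb, Sym2.mem_mk_left x b⟩,
        _, ⟨⟨hxp, hbad⟩, Sym2.mem_mk_left x p⟩, hxa_ne_xb,
        fun h => hp_notMem a hpa (h ▸ Sym2.mem_mk_right x p),
        fun h => hp_notMem b hpb (h ▸ Sym2.mem_mk_right x p)⟩
  · -- the good edge `xp` would meet the three bad edges `xa`, `xb`, `e`
    refine (hD _ ⟨hxp, hbad⟩).not_gt ?_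
    refine (Set.two_lt_ncard (hfin.subset fun _ h => h.1)).mpr
      ⟨_, ⟨ha, x, Sym2.mem_mk_left x p, Sym2.mem_mk_left x a⟩,
        _, ⟨hb, x, Sym2.mem_mk_left x p, Sym2.mem_mk_left x b⟩,
        _, ⟨he, p, Sym2.mem_mk_right x p, hp⟩, hxa_ne_xb,
        fun h => hp_notMem a hpa (h ▸ hp), fun h => hp_notMem b hpb (h ▸ hp)⟩

lemma ncard_setOf_isBadEdge_le_four
    (hgood : ∀ x ∈ endpointSet u v, ∃ e, IsGoodEdge B u v e ∧ x ∈ e)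
    (hD : ∀ e, IsGoodEdge B u v e → Dval B u v e ≤ 2) {x : V}
    (hx : 1 < {e | IsBadEdge B u v e ∧ x ∈ e}.ncard) : {e | IsBadEdge B u v e}.ncard ≤ 4 := by
  classical
  obtain ⟨_, ⟨ha, hxa⟩, _, ⟨hb, hxb⟩, hne⟩ :=
    (Set.one_lt_ncard (finite_setOf_isBadEdge.subset fun _ h => h.1)).mp hx
  obtain ⟨a, rfl⟩ := Sym2.mem_iff_exists.mp hxa
  obtain ⟨b, rfl⟩ := Sym2.mem_iff_exists.mp hxb
  obtain ⟨i, hi⟩ := mem_endpointSet_iff.mp (ha.1.mem_endpointSet_s5 hxa)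
  have hcount := Sym2.two_mul_ncard_le_mul_card (F := {e | IsBadEdge B u v e})
    {u i, v i, a, b} (fun _ he => he.not_isDiag)
    (fun _ he p hp => by
      simpa using mem_of_isBadEdge_of_two_badEdges_at hgood hD hi ha hb (mt (congrArg _) hne) he hp)
    (fun y _ => ncard_setOf_isBadEdge_mem_le_two hgood hD y)
  have := Finset.card_le_four (a := u i) (b := v i) (c := a) (d := b)
  omega

end BadEdges

theorem bad_edges_le_card_general
    {V : Type*}
    (B : SimpleGraph V) (t : ℕ) (ht : 4 ≤ t) (u v : Fin t → V)
    (hgood : ∀ x ∈ endpointSet u v, ∃ e, IsGoodEdge B u v e ∧ x ∈ e)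
    (hD : ∀ e, IsGoodEdge B u v e → Dval B u v e ≤ 2) :
    Set.ncard {e : Sym2 V | IsBadEdge B u v e} ≤ t := by
  by_cases hmatching : ∀ x, {e | IsBadEdge B u v e ∧ x ∈ e}.ncard ≤ 1
  · simpa using ncard_setOf_isBadEdge_le_card hmatching
  · obtain ⟨x, hx⟩ := not_forall.mp hmatching
    exact (ncard_setOf_isBadEdge_le_four hgood hD (not_le.mp hx)).trans ht

/-- If the family `𝒫` consists of at least 4 pairwise vertex-disjoint paths of `K_n`,
each with at least one edge, every vertex of `End(𝒫)` is incident with at least one good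
edge, and `D(e) ≤ 2` for every good edge `e`, then there are at most `|𝒫|` bad edges. -/
theorem bad_edges_le_card
    {V : Type*} [Fintype V] [DecidableEq V]
    (B : SimpleGraph V) (t : ℕ) (ht : 4 ≤ t) (u v : Fin t → V)
    (P : ∀ i : Fin t, (⊤ : SimpleGraph V).Walk (u i) (v i))
    (hP : ∀ i, (P i).IsPath) (hne : ∀ i, u i ≠ v i)
    (hdisj : ∀ i j, i ≠ j → List.Disjoint (P i).support (P j).support)
    (hgood : ∀ x ∈ endpointSet u v, ∃ e, IsGoodEdge B u v e ∧ x ∈ e)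
    (hD : ∀ e, IsGoodEdge B u v e → Dval B u v e ≤ 2) :
    Set.ncard {e : Sym2 V | IsBadEdge B u v e} ≤ t :=
  bad_edges_le_card_general B t ht u v hgood hD
end

section
/- Let p = |𝒫| > 2 and let br denote the number of bad edges, and suppose br < 2p − 2. Let e be a good edge that maximizes D(e) among all good edges, joining an endpoint of a path P1 ∈ 𝒫 to an endpoint of a different path P2 ∈ 𝒫. Let 𝒫' be the family obtained from 𝒫 by replacing P1 and P2 with the single path whose edge set is E(P1) ∪ E(P2) ∪ {e}, and let br' denote the number of bad edges with respect to 𝒫' (with the same graph B) and p' = |𝒫'| = p − 1. Then br' < 2p' − 2; moreover, if D(e) ≤ 1, then br' = 0. -/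
/-!
Every bad edge of the merged family is a bad edge of the old family avoiding `x` and `y`,
so `br' ≤ br - D(e)`, which settles the case `D(e) ≥ 2`.

If `D(e) ≤ 1`, maximality gives `D ≤ 1` for every good edge. An endpoint has `2 (p - 1)` cross
edges but there are fewer than `2p - 2` bad edges, so every endpoint lies on a good edge and
hence on at most one bad edge. Two bad edges with endpoints `w`, `c` on different paths are then
equal: the cross edge `s(w, c)` is either bad, and meets both at an endpoint, or good, and meets
both. So there is at most one bad edge; if it avoided `e`, then `D(e) = 0`, whereas a good edge
at one of its ends has positive `D`.
-/

section

variable {V ι : Type*} {B : SimpleGraph V} {u v : ι → V}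

lemma injective_sumElim_of_disjoint_support {G : SimpleGraph V}
    (P : ∀ i, G.Walk (u i) (v i)) (hne : ∀ i, u i ≠ v i)
    (hdisj : ∀ i j, i ≠ j → List.Disjoint (P i).support (P j).support) :
    Function.Injective (Sum.elim u v) := by
  have hsupp : ∀ i j {w}, w ∈ (P i).support → w ∈ (P j).support → i = j := fun i j _ hi hj =>
    by_contra fun hij => hdisj i j hij hi hj
  rintro (i | i) (j | j) h <;> simp only [Sum.elim_inl, Sum.elim_inr] at h
  · exact congrArg _ <| hsupp i j (P i).start_mem_support <| by
      rw [h]; exact (P j).start_mem_support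
  · obtain rfl := hsupp i j (P i).start_mem_support <| by rw [h]; exact (P j).end_mem_support
    exact absurd h (hne i)
  · obtain rfl := hsupp i j (P i).end_mem_support <| by rw [h]; exact (P j).start_mem_support
    exact absurd h.symm (hne i)
  · exact congrArg _ <| hsupp i j (P i).end_mem_support <| by
      rw [h]; exact (P j).end_mem_support

lemma index_eq_of_injective (hinj : Function.Injective (Sum.elim u v)) {c : V} {i j : ι}
    (hi : c = u i ∨ c = v i) (hj : c = u j ∨ c = v j) : i = j := by
  rcases hi with rfl | rfl <;> rcases hj with h | h
  · exact Sum.inl_injective (hinj h)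
  · exact absurd (hinj (a₁ := .inl i) (a₂ := .inr j) h) Sum.inl_ne_inr
  · exact absurd (hinj (a₁ := .inr i) (a₂ := .inl j) h) Sum.inr_ne_inl
  · exact Sum.inr_injective (hinj h)

lemma IsCrossEdge.exists_of_mem {f : Sym2 V} {c : V} (hf : IsCrossEdge u v f) (hc : c ∈ f) :
    ∃ j, c = u j ∨ c = v j := by
  obtain ⟨i, j, a, b, -, ha, hb, rfl⟩ := hf
  rcases Sym2.mem_iff.1 hc with rfl | rfl
  exacts [⟨i, ha⟩, ⟨j, hb⟩]

/-- `π` sends each path of the finer family `u v` to the path of `u' v'` containing it. -/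
lemma IsBadEdge.of_coarsen {ι' : Type*} {u' v' : ι' → V} (π : ι → ι')
    (hπ : ∀ i' c, (c = u' i' ∨ c = v' i') → ∃ k, π k = i' ∧ (c = u k ∨ c = v k))
    {f : Sym2 V} (hf : IsBadEdge B u' v' f) : IsBadEdge B u v f := by
  obtain ⟨⟨i, j, c, d, hij, hc, hd, rfl⟩, hB⟩ := hf
  obtain ⟨k, rfl, hck⟩ := hπ i c hc
  obtain ⟨l, rfl, hdl⟩ := hπ j d hd
  exact ⟨⟨k, l, c, d, fun hkl => hij (congrArg π hkl), hck, hdl, rfl⟩, hB⟩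

lemma Dval_pos [Finite V] {f g : Sym2 V} {c : V} (hf : IsBadEdge B u v f) (hcf : c ∈ f)
    (hcg : c ∈ g) : 0 < Dval B u v g :=
  (Set.ncard_pos (Set.toFinite _)).2 ⟨f, hf, c, hcg, hcf⟩

lemma two_mul_card_sub_one_le_ncard_crossEdge_mem [Finite V] [Fintype ι]
    (hinj : Function.Injective (Sum.elim u v)) {a : V} {j : ι} (ha : a = u j ∨ a = v j) :
    2 * (Fintype.card ι - 1) ≤ {f | IsCrossEdge u v f ∧ a ∈ f}.ncard := by
  classical
  let others : Finset (ι ⊕ ι) := (Finset.univ.erase j).disjSum (Finset.univ.erase j)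
  have hinj' : Function.Injective fun p => s(a, Sum.elim u v p) :=
    fun p q h => hinj (Sym2.congr_right.1 h)
  have hsub : (others.image fun p => s(a, Sum.elim u v p) : Set (Sym2 V)) ⊆
      {f | IsCrossEdge u v f ∧ a ∈ f} := by
    intro f hf
    obtain ⟨p, hp, rfl⟩ := Finset.mem_image.1 hf
    refine ⟨?_, Sym2.mem_mk_left _ _⟩
    rcases p with k | k <;>
      simp only [others, Finset.inl_mem_disjSum, Finset.inr_mem_disjSum, Finset.mem_erase,
        Finset.mem_univ, and_true] at hp
    exacts [⟨j, k, a, u k, Ne.symm hp, ha, Or.inl rfl, rfl⟩,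
      ⟨j, k, a, v k, Ne.symm hp, ha, Or.inr rfl, rfl⟩]
  calc 2 * (Fintype.card ι - 1) = (others.image fun p => s(a, Sum.elim u v p)).card := by
        rw [Finset.card_image_of_injective _ hinj', Finset.card_disjSum,
          Finset.card_erase_of_mem (Finset.mem_univ j), Finset.card_univ]
        ring
    _ ≤ _ := by
        rw [← Set.ncard_coe_finset]
        exact Set.ncard_le_ncard hsub

lemma exists_isGoodEdge_mem [Finite V] [Fintype ι] (hinj : Function.Injective (Sum.elim u v))
    (hbr : {f | IsBadEdge B u v f}.ncard < 2 * Fintype.card ι - 2)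
    {a : V} {j : ι} (ha : a = u j ∨ a = v j) : ∃ g, IsGoodEdge B u v g ∧ a ∈ g := by
  by_contra! hgood
  have hsub : {f | IsCrossEdge u v f ∧ a ∈ f} ⊆ {f | IsBadEdge B u v f} :=
    fun f ⟨hf, haf⟩ => ⟨hf, by_contra fun hB => hgood f ⟨hf, hB⟩ haf⟩
  have := two_mul_card_sub_one_le_ncard_crossEdge_mem hinj ha
  have := Set.ncard_le_ncard hsub
  omega

section DvalLeOne

variable [Finite V] (hD : ∀ g, IsGoodEdge B u v g → Dval B u v g ≤ 1)
include hD

lemma eq_of_isBadEdge_of_isGoodEdge {g f₁ f₂ : Sym2 V} {c₁ c₂ : V} (hg : IsGoodEdge B u v g)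
    (hf₁ : IsBadEdge B u v f₁) (hf₂ : IsBadEdge B u v f₂) (hc₁g : c₁ ∈ g) (hc₁ : c₁ ∈ f₁)
    (hc₂g : c₂ ∈ g) (hc₂ : c₂ ∈ f₂) : f₁ = f₂ :=
  (Set.ncard_le_one (Set.toFinite _)).1 (hD g hg) f₁ ⟨hf₁, c₁, hc₁g, hc₁⟩ f₂ ⟨hf₂, c₂, hc₂g, hc₂⟩

variable [Fintype ι] (hinj : Function.Injective (Sum.elim u v))
    (hbr : {f | IsBadEdge B u v f}.ncard < 2 * Fintype.card ι - 2)
include hinj hbr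

lemma eq_of_isBadEdge_of_mem {f₁ f₂ : Sym2 V} {c : V} (hf₁ : IsBadEdge B u v f₁)
    (hf₂ : IsBadEdge B u v f₂) (hc₁ : c ∈ f₁) (hc₂ : c ∈ f₂) : f₁ = f₂ := by
  obtain ⟨j, hj⟩ := hf₁.1.exists_of_mem hc₁
  obtain ⟨g, hg, hcg⟩ := exists_isGoodEdge_mem hinj hbr hj
  exact eq_of_isBadEdge_of_isGoodEdge hD hg hf₁ hf₂ hcg hc₁ hcg hc₂

lemma eq_of_isBadEdge_of_index_ne {f g : Sym2 V} {w c : V} {j k : ι}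
    (hf : IsBadEdge B u v f) (hg : IsBadEdge B u v g) (hwf : w ∈ f) (hcg : c ∈ g)
    (hw : w = u j ∨ w = v j) (hc : c = u k ∨ c = v k) (hjk : j ≠ k) : f = g := by
  have hcross : IsCrossEdge u v s(w, c) := ⟨j, k, w, c, hjk, hw, hc, rfl⟩
  by_cases hB : s(w, c) ∈ B.edgeSet
  · have hbad : IsBadEdge B u v s(w, c) := ⟨hcross, hB⟩
    exact (eq_of_isBadEdge_of_mem hD hinj hbr hf hbad hwf (Sym2.mem_mk_left _ _)).trans
      (eq_of_isBadEdge_of_mem hD hinj hbr hbad hg (Sym2.mem_mk_right _ _) hcg)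
  · exact eq_of_isBadEdge_of_isGoodEdge hD ⟨hcross, hB⟩ hf hg (Sym2.mem_mk_left _ _) hwf
      (Sym2.mem_mk_right _ _) hcg

lemma subsingleton_isBadEdge : {f | IsBadEdge B u v f}.Subsingleton := by
  intro f hf g hg
  obtain ⟨⟨j₁, j₂, a, b, hj, ha, hb, rfl⟩, -⟩ := id hf
  obtain ⟨⟨k, _, c, _, _, hc, _, rfl⟩, _⟩ := id hg
  by_cases hk : j₁ = k
  · exact eq_of_isBadEdge_of_index_ne hD hinj hbr hf hg (Sym2.mem_mk_right _ _)
      (Sym2.mem_mk_left _ _) hb hc (hk ▸ hj.symm)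
  · exact eq_of_isBadEdge_of_index_ne hD hinj hbr hf hg (Sym2.mem_mk_left _ _)
      (Sym2.mem_mk_left _ _) ha hc hk

end DvalLeOne

lemma exists_mem_mem_of_isBadEdge [Finite V] [Fintype ι]
    (hinj : Function.Injective (Sum.elim u v))
    (hbr : {f | IsBadEdge B u v f}.ncard < 2 * Fintype.card ι - 2) {e f : Sym2 V}
    (hmax : ∀ g, IsGoodEdge B u v g → Dval B u v g ≤ Dval B u v e) (he : Dval B u v e ≤ 1)
    (hf : IsBadEdge B u v f) : ∃ z, z ∈ e ∧ z ∈ f := by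
  by_contra hfe
  have hsing := subsingleton_isBadEdge (fun g hg => (hmax g hg).trans he) hinj hbr
  have hDe : Dval B u v e = 0 := (Set.ncard_eq_zero (Set.toFinite _)).2 <|
    Set.eq_empty_of_forall_notMem fun g ⟨hg, hge⟩ => hfe (hsing hg hf ▸ hge)
  obtain ⟨⟨j, _, a, _, _, ha, _, rfl⟩, _⟩ := id hf
  obtain ⟨g, hg, hag⟩ := exists_isGoodEdge_mem hinj hbr ha
  have := Dval_pos hf (Sym2.mem_mk_left _ _) hag
  have := hmax g hg
  omega

section Merge

variable [DecidableEq V]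

def otherEnd (u v : ι → V) (i : ι) (x : V) : V := if x = u i then v i else u i

lemma otherEnd_isEnd (i : ι) (x : V) : otherEnd u v i x = u i ∨ otherEnd u v i x = v i := by
  unfold otherEnd; split_ifs <;> simp

lemma otherEnd_ne (hinj : Function.Injective (Sum.elim u v)) (i : ι) (x : V) :
    otherEnd u v i x ≠ x := by
  unfold otherEnd; split_ifs with h
  · exact fun h' => hinj.ne Sum.inl_ne_inr (h.symm.trans h'.symm)
  · exact fun h' => h h'.symm

variable [DecidableEq ι]

def mergedStart (u v : ι → V) (i₁ i₂ : ι) (x : V) : {i // i ≠ i₂} → V :=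
  fun i => if i.1 = i₁ then otherEnd u v i₁ x else u i.1

def mergedEnd (u v : ι → V) (i₁ i₂ : ι) (y : V) : {i // i ≠ i₂} → V :=
  fun i => if i.1 = i₁ then otherEnd u v i₂ y else v i.1

def mergeIndex {i₁ i₂ : ι} (hi : i₁ ≠ i₂) (k : ι) : {i // i ≠ i₂} :=
  if h : k = i₂ then ⟨i₁, hi⟩ else ⟨k, h⟩

variable (hinj : Function.Injective (Sum.elim u v)) {i₁ i₂ : ι} (hi : i₁ ≠ i₂) {x y : V}
    (hx : x = u i₁ ∨ x = v i₁) (hy : y = u i₂ ∨ y = v i₂)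
include hinj hi hx hy

lemma exists_of_isEnd_merged (i : {i // i ≠ i₂}) {c : V}
    (hc : c = mergedStart u v i₁ i₂ x i ∨ c = mergedEnd u v i₁ i₂ y i) :
    ∃ k, mergeIndex hi k = i ∧ (c = u k ∨ c = v k) ∧ c ≠ x ∧ c ≠ y := by
  obtain ⟨i, hi₂⟩ := i
  by_cases h : i = i₁
  · subst h
    simp only [mergedStart, mergedEnd, if_true] at hc
    rcases hc with rfl | rfl
    · exact ⟨i, dif_neg hi, otherEnd_isEnd i x, otherEnd_ne hinj i x,
        fun h => hi (index_eq_of_injective hinj (otherEnd_isEnd i x) (h ▸ hy))⟩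
    · exact ⟨i₂, dif_pos rfl, otherEnd_isEnd i₂ y,
        fun h => hi (index_eq_of_injective hinj (h ▸ hx) (otherEnd_isEnd i₂ y)),
        otherEnd_ne hinj i₂ y⟩
  · simp only [mergedStart, mergedEnd, if_neg h] at hc
    exact ⟨i, dif_neg hi₂, hc, fun h' => h (index_eq_of_injective hinj hc (h' ▸ hx)),
      fun h' => hi₂ (index_eq_of_injective hinj hc (h' ▸ hy))⟩

lemma isBadEdge_of_isBadEdge_merged {f : Sym2 V}
    (hf : IsBadEdge B (mergedStart u v i₁ i₂ x) (mergedEnd u v i₁ i₂ y) f) :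
    IsBadEdge B u v f ∧ ¬ ∃ z, z ∈ s(x, y) ∧ z ∈ f := by
  refine ⟨hf.of_coarsen (mergeIndex hi) fun i c hc => ?_, ?_⟩
  · obtain ⟨k, hk, hck, -⟩ := exists_of_isEnd_merged hinj hi hx hy i hc
    exact ⟨k, hk, hck⟩
  · rintro ⟨z, hz, hzf⟩
    obtain ⟨i, hc⟩ := hf.1.exists_of_mem hzf
    obtain ⟨-, -, -, hzx, hzy⟩ := exists_of_isEnd_merged hinj hi hx hy i hc
    rcases Sym2.mem_iff.1 hz with rfl | rfl
    exacts [hzx rfl, hzy rfl]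

end Merge

end

theorem bad_edges_after_merge_general
    {V : Type*} [Fintype V] [DecidableEq V]
    (B : SimpleGraph V) (t : ℕ) (ht : 2 < t) (u v : Fin t → V)
    (P : ∀ i : Fin t, (⊤ : SimpleGraph V).Walk (u i) (v i))
    (hne : ∀ i, u i ≠ v i)
    (hdisj : ∀ i j, i ≠ j → List.Disjoint (P i).support (P j).support)
    (hbr : Set.ncard {e : Sym2 V | IsBadEdge B u v e} < 2 * t - 2)
    (i₁ i₂ : Fin t) (hi : i₁ ≠ i₂) (x y : V)
    (hx : x = u i₁ ∨ x = v i₁) (hy : y = u i₂ ∨ y = v i₂)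
    (hmax : ∀ f, IsGoodEdge B u v f → Dval B u v f ≤ Dval B u v s(x, y)) :
    -- the merged family `𝒫'`, indexed by the indices different from `i₂`:
    -- the path `P i₁` is replaced by the merged path, whose endpoints are the
    -- endpoint of `P i₁` other than `x` and the endpoint of `P i₂` other than `y`.
    Set.ncard {f : Sym2 V | IsBadEdge B
        (fun i : {i : Fin t // i ≠ i₂} =>
          if i.1 = i₁ then (if x = u i₁ then v i₁ else u i₁) else u i.1)
        (fun i : {i : Fin t // i ≠ i₂} =>
          if i.1 = i₁ then (if y = u i₂ then v i₂ else u i₂) else v i.1) f}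
      < 2 * (t - 1) - 2 ∧
    (Dval B u v s(x, y) ≤ 1 →
      Set.ncard {f : Sym2 V | IsBadEdge B
        (fun i : {i : Fin t // i ≠ i₂} =>
          if i.1 = i₁ then (if x = u i₁ then v i₁ else u i₁) else u i.1)
        (fun i : {i : Fin t // i ≠ i₂} =>
          if i.1 = i₁ then (if y = u i₂ then v i₂ else u i₂) else v i.1) f} = 0) := by
  have hinj := injective_sumElim_of_disjoint_support P hne hdisj
  have hbr' : {f | IsBadEdge B u v f}.ncard < 2 * Fintype.card (Fin t) - 2 := by
    rwa [Fintype.card_fin]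
  have hmerged : ∀ f, IsBadEdge B (mergedStart u v i₁ i₂ x) (mergedEnd u v i₁ i₂ y) f →
      IsBadEdge B u v f ∧ ¬ ∃ z, z ∈ s(x, y) ∧ z ∈ f :=
    fun f => isBadEdge_of_isBadEdge_merged hinj hi hx hy
  have hsmall : Dval B u v s(x, y) ≤ 1 →
      {f | IsBadEdge B (mergedStart u v i₁ i₂ x) (mergedEnd u v i₁ i₂ y) f}.ncard = 0 :=
    fun he => (Set.ncard_eq_zero (Set.toFinite _)).2 <|
      Set.eq_empty_of_forall_notMem fun f hf =>
        (hmerged f hf).2 (exists_mem_mem_of_isBadEdge hinj hbr' hmax he (hmerged f hf).1)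
  have hle : {f | IsBadEdge B (mergedStart u v i₁ i₂ x) (mergedEnd u v i₁ i₂ y) f}.ncard
      ≤ {f | IsBadEdge B u v f}.ncard - Dval B u v s(x, y) := by
    rw [Dval, ← Set.ncard_sdiff fun g hg => hg.1]
    exact Set.ncard_le_ncard fun f hf => ⟨(hmerged f hf).1, fun h => (hmerged f hf).2 h.2⟩
  have hlt : {f | IsBadEdge B (mergedStart u v i₁ i₂ x) (mergedEnd u v i₁ i₂ y) f}.ncard
      < 2 * (t - 1) - 2 := by
    rcases le_or_gt (Dval B u v s(x, y)) 1 with h | h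
    · have := hsmall h
      omega
    · omega
  exact ⟨hlt, hsmall⟩

/-- Suppose `𝒫` consists of `p > 2` pairwise vertex-disjoint paths of `K_n`, each with at
least one edge, and the number of bad edges satisfies `br < 2p - 2`. Let `e = s(x,y)` be a
good edge maximizing `D(e)`, joining the endpoint `x` of the path `P i₁` to the endpoint
`y` of the different path `P i₂`. Let `𝒫'` be the family obtained by merging `P i₁` and
`P i₂` along `e` (so the endpoints of the merged path are the endpoints of `P i₁` and
`P i₂` other than `x` and `y`), with `p' = p - 1` paths. Then the number `br'` of bad
edges w.r.t. `𝒫'` satisfies `br' < 2p' - 2`, and moreover `br' = 0` whenever `D(e) ≤ 1`. -/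
theorem bad_edges_after_merge
    {V : Type*} [Fintype V] [DecidableEq V]
    (B : SimpleGraph V) (t : ℕ) (ht : 2 < t) (u v : Fin t → V)
    (P : ∀ i : Fin t, (⊤ : SimpleGraph V).Walk (u i) (v i))
    (hP : ∀ i, (P i).IsPath) (hne : ∀ i, u i ≠ v i)
    (hdisj : ∀ i j, i ≠ j → List.Disjoint (P i).support (P j).support)
    (hbr : Set.ncard {e : Sym2 V | IsBadEdge B u v e} < 2 * t - 2)
    (i₁ i₂ : Fin t) (hi : i₁ ≠ i₂) (x y : V)
    (hx : x = u i₁ ∨ x = v i₁) (hy : y = u i₂ ∨ y = v i₂)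
    (he : IsGoodEdge B u v s(x, y))
    (hmax : ∀ f, IsGoodEdge B u v f → Dval B u v f ≤ Dval B u v s(x, y)) :
    -- the merged family `𝒫'`, indexed by the indices different from `i₂`:
    -- the path `P i₁` is replaced by the merged path, whose endpoints are the
    -- endpoint of `P i₁` other than `x` and the endpoint of `P i₂` other than `y`.
    Set.ncard {f : Sym2 V | IsBadEdge B
        (fun i : {i : Fin t // i ≠ i₂} =>
          if i.1 = i₁ then (if x = u i₁ then v i₁ else u i₁) else u i.1)
        (fun i : {i : Fin t // i ≠ i₂} =>
          if i.1 = i₁ then (if y = u i₂ then v i₂ else u i₂) else v i.1) f}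
      < 2 * (t - 1) - 2 ∧
    (Dval B u v s(x, y) ≤ 1 →
      Set.ncard {f : Sym2 V | IsBadEdge B
        (fun i : {i : Fin t // i ≠ i₂} =>
          if i.1 = i₁ then (if x = u i₁ then v i₁ else u i₁) else u i.1)
        (fun i : {i : Fin t // i ≠ i₂} =>
          if i.1 = i₁ then (if y = u i₂ then v i₂ else u i₂) else v i.1) f} = 0) :=
  bad_edges_after_merge_general B t ht u v P hne hdisj hbr i₁ i₂ hi x y hx hy hmax
end
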